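/- arXiv:1912.05118 — 6 statements merged into one kernel-verified Lean document; each statement's English description precedes it below -/
import Mathlib

section
/- Let r > r₀ > 0 and let P = {p₁,…,p_N} ⊂ ℝ^d (d > 1) be a finite set with circumradius r₀. Then the intersection of the balls of radius r centered at the points of P is contained in a ball of radius √(r² − r₀²); in particular the circumradius of P^r is at most √(r² − r₀²). -/
open Metric Set MeasureTheory Pointwise RealInnerProductSpace

variable {d : ℕ}

/-- The `r`-ball body generated by `X`: the intersection of all closed balls of
radius `r` centered at points of `X`. -/
def ballBody (r : ℝ) (X : Set (EuclideanSpace ℝ (Fin d))) :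
    Set (EuclideanSpace ℝ (Fin d)) :=
  ⋂ x ∈ X, closedBall x r

/-- The `r`-ball convex hull of `X`: the intersection of all closed balls of
radius `r` containing `X`. -/
def ballHull (r : ℝ) (X : Set (EuclideanSpace ℝ (Fin d))) :
    Set (EuclideanSpace ℝ (Fin d)) :=
  ⋂ y ∈ {y : EuclideanSpace ℝ (Fin d) | X ⊆ closedBall y r}, closedBall y r

/-- If P has circumradius r₀ attained at the origin, then
P^r ⊆ B[o, √(r² − r₀²)]. -/
theorem ballBody_subset_closedBall_sqrt (r r₀ : ℝ) (hr : r₀ < r) (hr₀ : 0 < r₀)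
    (hd : 1 < d) (P : Set (EuclideanSpace ℝ (Fin d))) (hPfin : P.Finite)
    (hcard : 1 < P.ncard)
    (hP : P ⊆ closedBall (0 : EuclideanSpace ℝ (Fin d)) r₀)
    (hcr : IsLeast {ρ : ℝ | ∃ c : EuclideanSpace ℝ (Fin d), P ⊆ closedBall c ρ} r₀) :
    ballBody r P ⊆ closedBall (0 : EuclideanSpace ℝ (Fin d)) (Real.sqrt (r ^ 2 - r₀ ^ 2)) := by
  intro x hx
  rcases eq_or_ne x 0 with rfl | hx0
  · simpa using Real.sqrt_nonneg (r ^ 2 - r₀ ^ 2)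
  have hxn : 0 < ‖x‖ := norm_pos_iff.mpr hx0
  have hnorm : ∀ p ∈ P, ‖p‖ ≤ r₀ := by
    intro p hp
    simpa [dist_zero_right] using hP hp
  have key : ∃ p ∈ P, ‖p‖ = r₀ ∧ ⟪p, x⟫ ≤ 0 := by
    by_contra hcon
    push_neg at hcon
    classical
    set εf : EuclideanSpace ℝ (Fin d) → ℝ := fun p =>
      if 0 < ⟪p, x⟫ then ⟪p, x⟫ / ‖x‖ ^ 2 else (r₀ - ‖p‖) / (2 * ‖x‖) with hεf
    have hεpos : ∀ p ∈ P, 0 < εf p := by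
      intro p hp
      by_cases h : 0 < ⟪p, x⟫
      · simp only [hεf, if_pos h]
        positivity
      · have hlt : ‖p‖ < r₀ := by
          rcases lt_or_eq_of_le (hnorm p hp) with h' | h'
          · exact h'
          · exact absurd (hcon p hp h') h
        simp only [hεf, if_neg h]
        have : 0 < r₀ - ‖p‖ := by linarith
        positivity
    have hFne : hPfin.toFinset.Nonempty := by
      rw [Set.Finite.toFinset_nonempty]
      exact Set.nonempty_of_ncard_ne_zero (by omega)
    set ε := hPfin.toFinset.inf' hFne εf with hε
    have hε0 : 0 < ε := by
      rw [hε, Finset.lt_inf'_iff]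
      intro p hp
      exact hεpos p (hPfin.mem_toFinset.mp hp)
    have hεle : ∀ p ∈ P, ε ≤ εf p := fun p hp =>
      Finset.inf'_le _ (hPfin.mem_toFinset.mpr hp)
    have hball : ∀ p ∈ P, ‖p - ε • x‖ < r₀ := by
      intro p hp
      have hexp : ‖p - ε • x‖ ^ 2 = ‖p‖ ^ 2 - 2 * (ε * ⟪p, x⟫) + ε ^ 2 * ‖x‖ ^ 2 := by
        rw [norm_sub_sq_real, real_inner_smul_right, norm_smul, Real.norm_eq_abs,
          abs_of_pos hε0, mul_pow]
      have hle := hεle p hp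
      by_cases h : 0 < ⟪p, x⟫
      · have hεb : ε ≤ ⟪p, x⟫ / ‖x‖ ^ 2 := by simp only [hεf, if_pos h] at hle; exact hle
        have h1 : ε * ‖x‖ ^ 2 ≤ ⟪p, x⟫ := by
          rw [div_eq_mul_inv] at hεb
          have := mul_le_mul_of_nonneg_right hεb (by positivity : (0:ℝ) ≤ ‖x‖ ^ 2)
          calc ε * ‖x‖ ^ 2 ≤ ⟪p, x⟫ * (‖x‖ ^ 2)⁻¹ * ‖x‖ ^ 2 := this
            _ = ⟪p, x⟫ := by field_simp
        have hsq : ‖p - ε • x‖ ^ 2 < r₀ ^ 2 := by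
          have hpr := hnorm p hp
          nlinarith [norm_nonneg p]
        exact lt_of_pow_lt_pow_left₀ 2 hr₀.le hsq
      · have hlt : ‖p‖ < r₀ := by
          rcases lt_or_eq_of_le (hnorm p hp) with h' | h'
          · exact h'
          · exact absurd (hcon p hp h') h
        have hεb : ε ≤ (r₀ - ‖p‖) / (2 * ‖x‖) := by simp only [hεf, if_neg h] at hle; exact hle
        have h1 : ε * ‖x‖ ≤ (r₀ - ‖p‖) / 2 := by
          have := mul_le_mul_of_nonneg_right hεb (norm_nonneg x)
          calc ε * ‖x‖ ≤ (r₀ - ‖p‖) / (2 * ‖x‖) * ‖x‖ := this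
            _ = (r₀ - ‖p‖) / 2 := by field_simp
        calc ‖p - ε • x‖ ≤ ‖p‖ + ‖ε • x‖ := norm_sub_le _ _
          _ = ‖p‖ + ε * ‖x‖ := by rw [norm_smul, Real.norm_eq_abs, abs_of_pos hε0]
          _ ≤ ‖p‖ + (r₀ - ‖p‖) / 2 := by linarith
          _ < r₀ := by linarith
    set ρ := hPfin.toFinset.sup' hFne (fun p => ‖p - ε • x‖) with hρ
    have hρlt : ρ < r₀ := by
      rw [hρ, Finset.sup'_lt_iff]
      intro p hp
      exact hball p (hPfin.mem_toFinset.mp hp)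
    have hmem : ρ ∈ {ρ : ℝ | ∃ c : EuclideanSpace ℝ (Fin d), P ⊆ closedBall c ρ} := by
      refine ⟨ε • x, fun p hp => ?_⟩
      rw [mem_closedBall, dist_eq_norm]
      exact Finset.le_sup' (fun p => ‖p - ε • x‖) (hPfin.mem_toFinset.mpr hp)
    have := hcr.2 hmem
    linarith
  obtain ⟨p, hp, hpn, hpx⟩ := key
  have hxp : dist x p ≤ r := by
    have := Set.mem_iInter₂.mp hx p hp
    simpa [mem_closedBall] using this
  rw [dist_eq_norm] at hxp
  have hsq : ‖x‖ ^ 2 ≤ r ^ 2 - r₀ ^ 2 := by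
    have hexp : ‖x - p‖ ^ 2 = ‖x‖ ^ 2 - 2 * ⟪x, p⟫ + ‖p‖ ^ 2 := norm_sub_sq_real x p
    have hcomm : ⟪x, p⟫ = ⟪p, x⟫ := real_inner_comm p x
    nlinarith [norm_nonneg (x - p), norm_nonneg x]
  rw [mem_closedBall, dist_zero_right]
  exact (Real.le_sqrt (norm_nonneg x) (by nlinarith)).mpr hsq
end

section
/- Let r ≥ r₀ > 0 and suppose two points x, −x lie on the sphere of radius r₀ centered at the origin in ℝ^d (so ‖x‖ = r₀ ≤ r). Then the r-spindle conv_r{x, −x} contains the ball of radius r − √(r² − r₀²) centered at the origin. -/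
open Metric Set MeasureTheory Pointwise RealInnerProductSpace

variable {d : ℕ}

/-- The r-spindle conv_r {x, −x} with ‖x‖ = r₀ ≤ r contains the ball of radius
r − √(r² − r₀²) centered at the origin. -/
theorem closedBall_subset_spindle (r r₀ : ℝ) (hr : r₀ ≤ r) (hr₀ : 0 < r₀)
    (x : EuclideanSpace ℝ (Fin d)) (hx : ‖x‖ = r₀) :
    closedBall (0 : EuclideanSpace ℝ (Fin d)) (r - Real.sqrt (r ^ 2 - r₀ ^ 2)) ⊆
      ballHull r {x, -x} := by
  intro z hz
  simp only [mem_closedBall, dist_zero_right] at hz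
  simp only [ballHull, mem_iInter, mem_setOf_eq]
  intro y hy
  have h1 : ‖x - y‖ ≤ r := by
    have := hy (mem_insert x _)
    rwa [mem_closedBall, dist_eq_norm] at this
  have h2 : ‖x + y‖ ≤ r := by
    have := hy (mem_insert_of_mem _ (mem_singleton _))
    rw [mem_closedBall, dist_eq_norm] at this
    rwa [show -x - y = -(x + y) by abel, norm_neg] at this
  have hrpos : (0:ℝ) ≤ r := le_trans hr₀.le hr
  have hpar : ‖x + y‖ ^ 2 + ‖x - y‖ ^ 2 = 2 * (‖x‖ ^ 2 + ‖y‖ ^ 2) := by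
    have := parallelogram_law_with_norm ℝ x y
    simpa [sq] using this
  have hy2 : ‖y‖ ^ 2 ≤ r ^ 2 - r₀ ^ 2 := by
    nlinarith [norm_nonneg (x + y), norm_nonneg (x - y), sq_nonneg ‖y‖]
  have hyle : ‖y‖ ≤ Real.sqrt (r ^ 2 - r₀ ^ 2) :=
    Real.le_sqrt_of_sq_le hy2
  rw [mem_closedBall, dist_eq_norm]
  calc ‖z - y‖ ≤ ‖z‖ + ‖y‖ := norm_sub_le z y
    _ ≤ (r - Real.sqrt (r ^ 2 - r₀ ^ 2)) + Real.sqrt (r ^ 2 - r₀ ^ 2) := by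
        exact add_le_add hz hyle
    _ = r := by ring
end

section
/- Let r ≥ r₀ > 0, and let Q = {p₁,…,p_{l+1}} be points on the sphere r₀·S^{d−1} in ℝ^d such that the origin lies in the relative interior of the convex hull of Q. Then the ball of radius r − √(r² − r₀²) centered at the origin is contained in the r-ball convex hull conv_r Q. -/
open Metric Set MeasureTheory Pointwise RealInnerProductSpace

variable {d : ℕ}

/-- If the points of Q lie on the sphere of radius r₀ and the origin is in the
relative interior of conv Q, then B[o, r − √(r² − r₀²)] ⊆ conv_r Q. -/
theorem closedBall_subset_ballHull (r r₀ : ℝ) (hr : r₀ ≤ r) (hr₀ : 0 < r₀)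
    (l : ℕ) (p : Fin (l + 1) → EuclideanSpace ℝ (Fin d))
    (hp : ∀ i, ‖p i‖ = r₀)
    (ho : (0 : EuclideanSpace ℝ (Fin d)) ∈
      intrinsicInterior ℝ (convexHull ℝ (Set.range p))) :
    closedBall (0 : EuclideanSpace ℝ (Fin d)) (r - Real.sqrt (r ^ 2 - r₀ ^ 2)) ⊆
      ballHull r (Set.range p) := by
  intro x hx
  rw [ballHull, Set.mem_iInter₂]
  intro y hy
  simp only [Set.mem_setOf_eq] at hy
  -- key : ‖y‖ ≤ √(r² - r₀²)
  have h0 : (0 : EuclideanSpace ℝ (Fin d)) ∈ convexHull ℝ (Set.range p) :=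
    intrinsicInterior_subset ho
  rw [convexHull_range_eq_exists_affineCombination] at h0
  obtain ⟨s, w, hw₀, hw₁, hwc⟩ := h0
  have hwl : ∑ i ∈ s, w i • p i = 0 := by
    rw [← Finset.affineCombination_eq_linear_combination s p w hw₁, hwc]
  have hkey : ∀ i, ⟪p i, y⟫ ≥ (r₀ ^ 2 + ‖y‖ ^ 2 - r ^ 2) / 2 := by
    intro i
    have h1 : ‖p i - y‖ ≤ r := by
      have := hy (Set.mem_range_self i)
      rwa [Metric.mem_closedBall, dist_comm, dist_eq_norm, norm_sub_rev] at this
    have h2 : ‖p i - y‖ ^ 2 ≤ r ^ 2 := by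
      apply sq_le_sq' _ h1
      nlinarith [norm_nonneg (p i - y)]
    have h3 : ‖p i - y‖ ^ 2 = ‖p i‖ ^ 2 - 2 * ⟪p i, y⟫ + ‖y‖ ^ 2 :=
      norm_sub_sq_real (p i) y
    rw [hp i] at h3
    nlinarith
  have hzero : (0 : ℝ) = ∑ i ∈ s, w i * ⟪p i, y⟫ := by
    have : ⟪(0 : EuclideanSpace ℝ (Fin d)), y⟫ = (0 : ℝ) := inner_zero_left y
    rw [← this, ← hwl, sum_inner]
    exact Finset.sum_congr rfl fun i _ => real_inner_smul_left _ _ _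
  have hge : ∑ i ∈ s, w i * ⟪p i, y⟫ ≥
      ∑ i ∈ s, w i * ((r₀ ^ 2 + ‖y‖ ^ 2 - r ^ 2) / 2) := by
    apply Finset.sum_le_sum
    intro i hi
    exact mul_le_mul_of_nonneg_left (hkey i) (hw₀ i hi)
  rw [← Finset.sum_mul, hw₁, one_mul] at hge
  have hy2 : ‖y‖ ^ 2 ≤ r ^ 2 - r₀ ^ 2 := by linarith [hzero ▸ hge]
  have hny : ‖y‖ ≤ Real.sqrt (r ^ 2 - r₀ ^ 2) := Real.le_sqrt_of_sq_le hy2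
  rw [Metric.mem_closedBall] at hx ⊢
  calc dist x y ≤ dist x 0 + dist 0 y := dist_triangle x 0 y
    _ ≤ (r - Real.sqrt (r ^ 2 - r₀ ^ 2)) + Real.sqrt (r ^ 2 - r₀ ^ 2) := by
        apply add_le_add hx
        rw [dist_comm, dist_zero_right]; exact hny
    _ = r := by ring
end

section
/- Let B be a supporting ball of radius r of conv_r Q, where Q ⊂ r₀·S^{d−1} with o ∈ relint(conv Q) and r ≥ r₀. If B contains conv_r Q and some point p_i ∈ Q lies on the boundary of B, then −p_i ∈ B. -/
open Metric Set MeasureTheory Pointwise RealInnerProductSpace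

variable {d : ℕ}

/-- If B = B[c,r] is a supporting ball of conv_r Q with some pᵢ on its boundary,
then −pᵢ ∈ B. -/
theorem neg_mem_supporting_ball (r r₀ : ℝ) (hr : r₀ ≤ r) (hr₀ : 0 < r₀)
    (l : ℕ) (p : Fin (l + 1) → EuclideanSpace ℝ (Fin d))
    (hp : ∀ i, ‖p i‖ = r₀)
    (ho : (0 : EuclideanSpace ℝ (Fin d)) ∈
      intrinsicInterior ℝ (convexHull ℝ (Set.range p)))
    (c : EuclideanSpace ℝ (Fin d))
    (hsupp : ballHull r (Set.range p) ⊆ closedBall c r)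
    (i : Fin (l + 1)) (hi : p i ∈ sphere c r) :
    -p i ∈ closedBall c r := by
  -- every point of Q lies in the ball
  have hQ : ∀ j, p j ∈ closedBall c r := by
    intro j
    apply hsupp
    simp only [ballHull, Set.mem_iInter]
    intro y hy
    exact hy (Set.mem_range_self j)
  have hQ' : ∀ j, ‖p j - c‖ ≤ r := by
    intro j
    simpa [mem_closedBall, dist_eq_norm] using hQ j
  have hi' : ‖p i - c‖ = r := by
    simpa [mem_sphere_iff_norm] using hi
  -- ⟪p i, c⟫ ≤ ⟪p j, c⟫ for all j
  have key : ∀ j, ⟪p i, c⟫ ≤ ⟪p j, c⟫ := by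
    intro j
    have h1 : ‖p j - c‖ ^ 2 ≤ ‖p i - c‖ ^ 2 := by
      have := hQ' j
      nlinarith [norm_nonneg (p j - c), norm_nonneg (p i - c)]
    have e1 : ‖p j - c‖ ^ 2 = ‖p j‖ ^ 2 - 2 * ⟪p j, c⟫ + ‖c‖ ^ 2 := by
      rw [← real_inner_self_eq_norm_sq, ← real_inner_self_eq_norm_sq,
        ← real_inner_self_eq_norm_sq, inner_sub_sub_self]
      ring_nf
      rw [real_inner_comm c (p j)]
      ring
    have e2 : ‖p i - c‖ ^ 2 = ‖p i‖ ^ 2 - 2 * ⟪p i, c⟫ + ‖c‖ ^ 2 := by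
      rw [← real_inner_self_eq_norm_sq, ← real_inner_self_eq_norm_sq,
        ← real_inner_self_eq_norm_sq, inner_sub_sub_self]
      ring_nf
      rw [real_inner_comm c (p i)]
      ring
    rw [e1, e2, hp i, hp j] at h1
    linarith
  -- 0 is in the convex hull
  have hz : (0 : EuclideanSpace ℝ (Fin d)) ∈ convexHull ℝ (Set.range p) :=
    intrinsicInterior_subset ho
  -- hence ⟪p i, c⟫ ≤ 0
  have hneg : ⟪p i, c⟫ ≤ 0 := by
    have hsub : convexHull ℝ (Set.range p) ⊆
        {x : EuclideanSpace ℝ (Fin d) | ⟪p i, c⟫ ≤ ⟪x, c⟫} := by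
      apply convexHull_min
      · rintro x ⟨j, rfl⟩
        exact key j
      · have : Convex ℝ {x : EuclideanSpace ℝ (Fin d) | ⟪p i, c⟫ ≤ ⟪x, c⟫} := by
          have := convex_halfSpace_ge (f := fun x : EuclideanSpace ℝ (Fin d) => ⟪x, c⟫)
            ⟨fun a b => inner_add_left a b c, fun m a => real_inner_smul_left a c m⟩
            (⟪p i, c⟫)
          exact this
        exact this
    have := hsub hz
    simpa using this
  -- conclude
  rw [mem_closedBall, dist_eq_norm]
  have hsq : ‖-p i - c‖ ^ 2 ≤ ‖p i - c‖ ^ 2 := by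
    have e1 : ‖-p i - c‖ ^ 2 = ‖p i‖ ^ 2 + 2 * ⟪p i, c⟫ + ‖c‖ ^ 2 := by
      have : -p i - c = -(p i + c) := by abel
      rw [this, norm_neg, ← real_inner_self_eq_norm_sq, ← real_inner_self_eq_norm_sq,
        ← real_inner_self_eq_norm_sq, inner_add_add_self]
      ring_nf
      rw [real_inner_comm c (p i)]
      ring
    have e2 : ‖p i - c‖ ^ 2 = ‖p i‖ ^ 2 - 2 * ⟪p i, c⟫ + ‖c‖ ^ 2 := by
      rw [← real_inner_self_eq_norm_sq, ← real_inner_self_eq_norm_sq,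
        ← real_inner_self_eq_norm_sq, inner_sub_sub_self]
      ring_nf
      rw [real_inner_comm c (p i)]
      ring
    rw [e1, e2]
    linarith
  rw [hi'] at hsq
  have hrpos : (0:ℝ) ≤ r := le_trans hr₀.le hr
  nlinarith [norm_nonneg (-p i - c)]
end

section
/- Let X = {x₁,…,x_m} ⊂ S^d not lying on an open hemisphere, and let V_i be the Voronoi cell of x_i in S^d (points at least as close to x_i as to any other x_j). Then V_i is contained in the closed hemisphere centered at x_i, for every i. -/
open Metric Set MeasureTheory RealInnerProductSpace

/-- If x₁,…,x_m on S^d do not lie in an open hemisphere, then each Voronoi cell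
V_i is contained in the closed hemisphere centered at x_i. -/
theorem voronoi_subset_hemisphere (d m : ℕ)
    (x : Fin m → sphere (0 : EuclideanSpace ℝ (Fin (d + 1))) 1)
    (hhemi : ¬∃ u : sphere (0 : EuclideanSpace ℝ (Fin (d + 1))) 1,
      ∀ j, 0 < ⟪(u : EuclideanSpace ℝ (Fin (d + 1))), (x j : EuclideanSpace ℝ (Fin (d + 1)))⟫)
    (i : Fin m) (y : sphere (0 : EuclideanSpace ℝ (Fin (d + 1))) 1)
    (hy : ∀ j, Real.arccos ⟪(y : EuclideanSpace ℝ (Fin (d + 1))), (x i : EuclideanSpace ℝ (Fin (d + 1)))⟫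
        ≤ Real.arccos ⟪(y : EuclideanSpace ℝ (Fin (d + 1))), (x j : EuclideanSpace ℝ (Fin (d + 1)))⟫) :
    0 ≤ ⟪(y : EuclideanSpace ℝ (Fin (d + 1))), (x i : EuclideanSpace ℝ (Fin (d + 1)))⟫ := by
  by_contra hneg
  push_neg at hneg
  have hny : ‖(y : EuclideanSpace ℝ (Fin (d + 1)))‖ = 1 :=
    mem_sphere_zero_iff_norm.mp y.2
  have hbound : ∀ j : Fin m,
      |⟪(y : EuclideanSpace ℝ (Fin (d + 1))), (x j : EuclideanSpace ℝ (Fin (d + 1)))⟫| ≤ 1 := by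
    intro j
    have := abs_real_inner_le_norm (y : EuclideanSpace ℝ (Fin (d + 1)))
      (x j : EuclideanSpace ℝ (Fin (d + 1)))
    simpa [hny, mem_sphere_zero_iff_norm.mp (x j).2] using this
  apply hhemi
  refine ⟨-y, fun j => ?_⟩
  have hle : ⟪(y : EuclideanSpace ℝ (Fin (d + 1))), (x j : EuclideanSpace ℝ (Fin (d + 1)))⟫
      ≤ ⟪(y : EuclideanSpace ℝ (Fin (d + 1))), (x i : EuclideanSpace ℝ (Fin (d + 1)))⟫ := by
    by_contra hlt
    push_neg at hlt
    have hi := abs_le.mp (hbound i)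
    have hj := abs_le.mp (hbound j)
    have := Real.strictAntiOn_arccos ⟨hi.1, hi.2⟩ ⟨hj.1, hj.2⟩ hlt
    exact absurd (hy j) (not_le.mpr this)
  have : ⟪(y : EuclideanSpace ℝ (Fin (d + 1))), (x j : EuclideanSpace ℝ (Fin (d + 1)))⟫ < 0 :=
    lt_of_le_of_lt hle hneg
  have hcoe : ((-y : sphere (0 : EuclideanSpace ℝ (Fin (d + 1))) 1) : EuclideanSpace ℝ (Fin (d + 1)))
      = -(y : EuclideanSpace ℝ (Fin (d + 1))) := rfl
  rw [hcoe, inner_neg_left]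
  linarith
end

section
/- Let Q = {p₁,…,p_{l+1}} ⊂ r₀·S^{d−1} ⊂ ℝ^d span an l-dimensional simplex with the origin in its relative interior (1 ≤ l ≤ d). Then the circumradius about the origin of the central symmetral of Q satisfies √((l+1)/(2l))·r₀ ≤ r_cr^o(M_o(Q)), i.e., √((l+1)/(2l))·r₀ ≤ (1/2)·diam(Q). -/
open Metric Set MeasureTheory Pointwise RealInnerProductSpace

variable {d : ℕ}

/-- Jung-type bound: if Q spans an l-simplex inscribed in r₀·S^{d−1} with the
origin in its relative interior, then √((l+1)/(2l))·r₀ ≤ diam(Q)/2. -/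
theorem jung_type_bound (r₀ : ℝ) (hr₀ : 0 < r₀) (l : ℕ) (hl : 1 ≤ l) (hld : l ≤ d)
    (p : Fin (l + 1) → EuclideanSpace ℝ (Fin d))
    (hp : ∀ i, ‖p i‖ = r₀) (hind : AffineIndependent ℝ p)
    (ho : (0 : EuclideanSpace ℝ (Fin d)) ∈
      intrinsicInterior ℝ (convexHull ℝ (Set.range p))) :
    Real.sqrt ((l + 1) / (2 * l)) * r₀ ≤ (1 / 2) * Metric.diam (Set.range p) := by
  classical
  have h0 : (0 : EuclideanSpace ℝ (Fin d)) ∈ convexHull ℝ (Set.range p) :=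
    intrinsicInterior_subset ho
  rw [convexHull_range_eq_exists_affineCombination] at h0
  obtain ⟨s, w0, hw0, hw1, hcomb⟩ := h0
  set w : Fin (l + 1) → ℝ := fun i => if i ∈ s then w0 i else 0 with hwdef
  have hwnn : ∀ i, 0 ≤ w i := fun i => by
    by_cases h : i ∈ s <;> simp [w, h, hw0 i]
  have hwsum : ∑ i, w i = 1 := by
    rw [← hw1]
    simp [w, Finset.sum_ite_mem]
  have hzero : ∑ i, w i • p i = 0 := by
    have h := Finset.affineCombination_eq_linear_combination s p w0 hw1
    rw [h] at hcomb
    rw [← hcomb, ← Finset.sum_subset (Finset.subset_univ s)]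
    · exact Finset.sum_congr rfl fun i hi => by simp [w, hi]
    · intro i _ hi
      simp [w, hi]
  set D := Metric.diam (Set.range p) with hDdef
  have hDnn : 0 ≤ D := Metric.diam_nonneg
  have hD : ∀ i j, ‖p i - p j‖ ≤ D := by
    intro i j
    rw [← dist_eq_norm]
    exact Metric.dist_le_diam_of_mem ((Set.finite_range p).isBounded)
      (Set.mem_range_self i) (Set.mem_range_self j)
  have hinner : ∑ i, ∑ j, w i * w j * ⟪p i, p j⟫ = 0 := by
    have h : ⟪∑ i, w i • p i, ∑ j, w j • p j⟫ = (0:ℝ) := by rw [hzero]; simp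
    rw [← h, sum_inner]
    refine Finset.sum_congr rfl fun i _ => ?_
    rw [inner_sum]
    refine Finset.sum_congr rfl fun j _ => ?_
    rw [real_inner_smul_left, real_inner_smul_right]
    ring
  have hA : ∑ i : Fin (l+1), ∑ j : Fin (l+1), w i * w j * (2 * r₀ ^ 2) = 2 * r₀ ^ 2 := by
    simp_rw [mul_assoc, ← Finset.mul_sum, ← Finset.sum_mul, hwsum, one_mul]
  have hS : ∑ i, ∑ j, w i * w j * ‖p i - p j‖ ^ 2 = 2 * r₀ ^ 2 := by
    have expand : ∀ i j : Fin (l+1), w i * w j * ‖p i - p j‖ ^ 2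
        = w i * w j * (2 * r₀ ^ 2) - 2 * (w i * w j * ⟪p i, p j⟫) := by
      intro i j
      rw [norm_sub_sq_real, hp i, hp j]
      ring
    simp_rw [expand, Finset.sum_sub_distrib, ← Finset.mul_sum]
    rw [hA, hinner, mul_zero, sub_zero]
  -- bound the double sum by D² (1 - ∑ wᵢ²)
  have hbound : ∑ i, ∑ j, w i * w j * ‖p i - p j‖ ^ 2
      ≤ D ^ 2 * (1 - ∑ i, w i ^ 2) := by
    have step : ∑ i, ∑ j, w i * w j * ‖p i - p j‖ ^ 2
        ≤ ∑ i : Fin (l+1), ∑ j : Fin (l+1),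
            (w i * w j * D ^ 2 - if i = j then w i * w j * D ^ 2 else 0) := by
      refine Finset.sum_le_sum fun i _ => Finset.sum_le_sum fun j _ => ?_
      by_cases h : i = j
      · subst h
        simp
      · simp only [h, if_false, sub_zero]
        have h1 : ‖p i - p j‖ ^ 2 ≤ D ^ 2 := by
          have := hD i j
          nlinarith [norm_nonneg (p i - p j)]
        have h2 : 0 ≤ w i * w j := mul_nonneg (hwnn i) (hwnn j)
        nlinarith
    refine step.trans (le_of_eq ?_)
    simp_rw [Finset.sum_sub_distrib, Finset.sum_ite_eq, Finset.mem_univ, if_true]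
    have hA' : ∑ i : Fin (l+1), ∑ j : Fin (l+1), w i * w j * D ^ 2 = D ^ 2 := by
      simp_rw [mul_assoc, ← Finset.mul_sum, ← Finset.sum_mul, hwsum, one_mul]
    rw [hA', show ∑ i : Fin (l+1), w i * w i * D ^ 2 = D ^ 2 * ∑ i, w i ^ 2 by
      rw [Finset.mul_sum]; exact Finset.sum_congr rfl fun i _ => by ring]
    ring
  -- Cauchy–Schwarz lower bound on ∑ wᵢ²
  have hcs : 1 ≤ ((l : ℝ) + 1) * ∑ i, w i ^ 2 := by
    have := sq_sum_le_card_mul_sum_sq (s := (Finset.univ : Finset (Fin (l+1)))) (f := w)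
    rw [hwsum] at this
    simpa using this
  set L : ℝ := (l : ℝ) with hLdef
  have hL : 1 ≤ L := Nat.one_le_cast.mpr hl
  have hkey : 2 * r₀ ^ 2 * (L + 1) ≤ D ^ 2 * L := by
    have hsw : 1 / (L + 1) ≤ ∑ i, w i ^ 2 := by
      rw [div_le_iff₀ (by linarith)]
      linarith [hcs]
    have h1 : 2 * r₀ ^ 2 ≤ D ^ 2 * (1 - ∑ i, w i ^ 2) := hS ▸ hbound
    have h2 : D ^ 2 * (1 - ∑ i, w i ^ 2) ≤ D ^ 2 * (1 - 1 / (L + 1)) :=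
      mul_le_mul_of_nonneg_left (by linarith) (sq_nonneg D)
    have h3 : 2 * r₀ ^ 2 ≤ D ^ 2 * (1 - 1 / (L + 1)) := h1.trans h2
    have hL1 : (0:ℝ) < L + 1 := by linarith
    have := mul_le_mul_of_nonneg_right h3 hL1.le
    calc 2 * r₀ ^ 2 * (L + 1) ≤ D ^ 2 * (1 - 1 / (L + 1)) * (L + 1) := this
      _ = D ^ 2 * L := by field_simp; ring
  -- conclude via square roots
  have hgoal : (L + 1) / (2 * L) * r₀ ^ 2 ≤ D ^ 2 / 4 := by
    rw [div_mul_eq_mul_div, div_le_div_iff₀ (by linarith) (by norm_num)]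
    nlinarith [hkey]
  have hlhs : Real.sqrt ((L + 1) / (2 * L)) * r₀
      = Real.sqrt ((L + 1) / (2 * L) * r₀ ^ 2) := by
    rw [Real.sqrt_mul (by positivity), Real.sqrt_sq hr₀.le]
  have hrhs : (1 / 2 : ℝ) * D = Real.sqrt (D ^ 2 / 4) := by
    rw [show D ^ 2 / 4 = (D / 2) ^ 2 by ring, Real.sqrt_sq (by linarith)]
    ring
  rw [show ((l:ℝ) + 1) / (2 * l) = (L + 1) / (2 * L) from rfl, hlhs, hrhs]
  exact Real.sqrt_le_sqrt hgoal
end
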